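/- Let 1 ≤ q_l ≤ q_r ≤ N, and let H be a finite group of Hermitian, pairwise commuting Pauli strings on N qubits with −I ∉ H, such that every element of H acts as the identity on every site outside the interval [q_l, q_r]. Write |H| = 2^m. Then there exist m elements s_1, …, s_m generating H such that at most two of the s_j act nontrivially on the site q_l, and at most two of the s_j act nontrivially on the site q_r. -/

import Mathlib

/-!
Writing a Pauli string `c • X^a Z^b` as its binary vector `(a, b)` turns multiplication into
addition over `ZMod 2`. Since `-I ∉ H`, the only scalar in `H` is `I` and every element squares
to `I`, so `g ↦ (a, b)` embeds `H` onto an `m`-dimensional subspace `V`, and a family of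
elements generates `H` as soon as its vectors span `V`. Acting trivially on a set `A` of sites is
the kernel of the restriction to `A`, a subspace of codimension at most `2 |A|` in `V`. Finally,
for any two subspaces `U, W` there is a basis with at most `codim U` vectors outside `U` and at
most `codim W` outside `W`: complete a basis of `U ⊓ W` to bases of `U` and of `W`, then to the
whole space.
-/

open scoped Classical
open scoped Matrix
noncomputable section
namespace QStab

/-- The space of operators (matrices) on a chain of qubits indexed by `ι`. -/
abbrev Op (ι : Type*) [Fintype ι] [DecidableEq ι] : Type _ :=
  Matrix (ι → Fin 2) (ι → Fin 2) ℂ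

variable {ι : Type*} [Fintype ι] [DecidableEq ι]

/-- The Pauli `X` operator at site `i`. -/
def PX (i : ι) : Op ι :=
  Matrix.of fun f g => if f = Function.update g i (g i + 1) then 1 else 0

/-- The Pauli `Z` operator at site `i`. -/
def PZ (i : ι) : Op ι :=
  Matrix.of fun f g => if f = g then ((-1 : ℂ)) ^ ((f i : ℕ)) else 0

/-- The (ordered) product `∏ i, (X i)^(a i)`. -/
def XProd (a : ι → Fin 2) : Op ι :=
  (Finset.univ.toList.map fun i => PX i ^ ((a i : ℕ))).prod

/-- The (ordered) product `∏ i, (Z i)^(b i)`. -/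
def ZProd (b : ι → Fin 2) : Op ι :=
  (Finset.univ.toList.map fun i => PZ i ^ ((b i : ℕ))).prod

/-- `c` is one of the allowed phases `1, −1, i, −i` of a Pauli string. -/
def IsPhase (c : ℂ) : Prop := c = 1 ∨ c = -1 ∨ c = Complex.I ∨ c = -Complex.I

/-- `M` is a Pauli string: `M = c • (∏ i, (X i)^(a i)) * (∏ i, (Z i)^(b i))`. -/
def IsPauli (M : Op ι) : Prop :=
  ∃ (c : ℂ) (a b : ι → Fin 2), IsPhase c ∧ M = c • (XProd a * ZProd b)

/-- `M` is a Pauli string acting as the identity on every site outside `A`. -/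
def IsPauliSupportedOn (A : Finset ι) (M : Op ι) : Prop :=
  ∃ (c : ℂ) (a b : ι → Fin 2), IsPhase c ∧ (∀ i, i ∉ A → a i = 0 ∧ b i = 0) ∧
    M = c • (XProd a * ZProd b)

/-- `M` is a Pauli string acting trivially (as the identity) at the site `i`. -/
def ActsTriviallyAt (i : ι) (M : Op ι) : Prop :=
  ∃ (c : ℂ) (a b : ι → Fin 2), IsPhase c ∧ a i = 0 ∧ b i = 0 ∧
    M = c • (XProd a * ZProd b)

/-- The function on all of `ι` agreeing with `f` on `A` and with `h` on `Aᶜ`. -/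
def combine (A : Finset ι) (f : ↥A → Fin 2) (h : ↥(Aᶜ) → Fin 2) : ι → Fin 2 :=
  fun i => if hi : i ∈ A then f ⟨i, hi⟩ else h ⟨i, Finset.mem_compl.mpr hi⟩

/-- The partial trace over the qubits outside `A` (the reduced density matrix on `A`). -/
def ptrace (A : Finset ι) (ρ : Op ι) : Matrix (↥A → Fin 2) (↥A → Fin 2) ℂ :=
  Matrix.of fun f g => ∑ h : ↥(Aᶜ) → Fin 2, ρ (combine A f h) (combine A g h)

/-- The rank-one projector `|ψ⟩⟨ψ|`. -/
def outer (ψ : (ι → Fin 2) → ℂ) : Op ι :=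
  Matrix.of fun f g => ψ f * star (ψ g)

/-- `ψ` is a unit vector. -/
def IsUnitVec (ψ : (ι → Fin 2) → ℂ) : Prop :=
  ∑ f, Complex.normSq (ψ f) = 1

/-- The von Neumann entropy `−Tr(ρ log ρ)` of a Hermitian matrix, computed through its
eigenvalues (with the convention `0 log 0 = 0`, and junk value `0` on non-Hermitian input). -/
def vnEntropy {n : Type*} [Fintype n] [DecidableEq n] (ρ : Matrix n n ℂ) : ℝ :=
  if h : ρ.IsHermitian then -∑ i, (h.eigenvalues i * Real.log (h.eigenvalues i)) else 0

/-- The von Neumann entanglement entropy of `ψ` in the region `A`: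
`S_A(ψ) = −Tr(ρ_A log ρ_A)` where `ρ_A` is the reduced density matrix of `|ψ⟩⟨ψ|`. -/
def entEntropy (A : Finset ι) (ψ : (ι → Fin 2) → ℂ) : ℝ :=
  vnEntropy (ptrace A (outer ψ))

/-- The product of the `s i` over the subset `T` (in increasing order of indices). -/
def subProd {N : ℕ} (s : Fin N → Op ι) (T : Finset (Fin N)) : Op ι :=
  ((Finset.sort T (· ≤ ·)).map s).prod

/-- `{s 0, …, s (N-1)}` is an independent set of `N` Hermitian pairwise commuting Pauli
strings: products over distinct subsets are pairwise distinct and no nonempty product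
equals `±I`. -/
def IndepStabs {N : ℕ} (s : Fin N → Op ι) : Prop :=
  (∀ i, IsPauli (s i)) ∧ (∀ i, (s i).IsHermitian) ∧
  (∀ i j, Commute (s i) (s j)) ∧
  Function.Injective (subProd s) ∧
  (∀ T : Finset (Fin N), T.Nonempty → subProd s T ≠ 1 ∧ subProd s T ≠ -1)

/-- The 1-based label of the site `i : Fin N`, so that the qubits are labeled `1, …, N`. -/
def lbl {N : ℕ} (i : Fin N) : ℕ := (i : ℕ) + 1

/-- The single-qubit operator `Z p` at the site with label `p` (1-based). -/
def ZSingle (N : ℕ) (p : ℕ) : Op (Fin N) :=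
  ZProd fun i => if lbl i = p then 1 else 0

/-- The string of `Z`'s at the labels `p, p+2, …, q` (sites of the parity of `p` in `[p,q]`). -/
def ZStr (N : ℕ) (p q : ℕ) : Op (Fin N) :=
  ZProd fun i => if p ≤ lbl i ∧ lbl i ≤ q ∧ lbl i % 2 = p % 2 then 1 else 0

/-- The string operator `g_{p,q} = X p * (∏_{k=0}^{(q−p)/2−1} Z (p+2k+1)) * X q`
for labels `p < q` of the same parity.  In particular the cluster stabilizer
`g i = X (i−1) * Z i * X (i+1)` is `GStr N (i-1) (i+1)`. -/
def GStr (N : ℕ) (p q : ℕ) : Op (Fin N) :=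
  (XProd fun i => if lbl i = p ∨ lbl i = q then 1 else 0) *
    ZProd fun i => if p < lbl i ∧ lbl i < q ∧ ¬(lbl i % 2 = p % 2) then 1 else 0

/-- `G1 = ∏_{i even} Z i` (even labels). -/
def Gsym1 (N : ℕ) : Op (Fin N) := ZProd fun i => if lbl i % 2 = 0 then 1 else 0

/-- `G2 = ∏_{i odd} Z i` (odd labels). -/
def Gsym2 (N : ℕ) : Op (Fin N) := ZProd fun i => if lbl i % 2 = 1 then 1 else 0

/-- The measurement channel `𝓔_S(ρ) = Π₊ ρ Π₊ + Π₋ ρ Π₋` with `Π± = (I ± S)/2`. -/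
def measChannel (S ρ : Op ι) : Op ι :=
  ((2 : ℂ)⁻¹ • (1 + S)) * ρ * ((2 : ℂ)⁻¹ • (1 + S)) +
    ((2 : ℂ)⁻¹ • (1 - S)) * ρ * ((2 : ℂ)⁻¹ • (1 - S))

/-- Measurement-update map on stabilizer groups: if the measured Pauli `M` commutes with
every element of `G` the group is unchanged; otherwise the new group is generated by the
centralizer `C_G(M)` together with `ε • M` (where `ε` is the measurement outcome sign). -/
def Meas (G : Submonoid (Op ι)) (M : Op ι) (ε : ℂ) : Submonoid (Op ι) :=
  if ∀ g ∈ G, M * g = g * M then G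
  else Submonoid.closure ({g | g ∈ G ∧ M * g = g * M} ∪ {ε • M})

/-- The isolated-SPT stabilizer set `𝒮(A)`: the string operators `g_{q_i, q_{i+1}}` between
consecutive elements of `A`, together with the total `Z`-product `∏_{p ∈ A} Z p`. -/
def SPTstabs (N : ℕ) (A : Finset ℕ) : Set (Op (Fin N)) :=
  {m | (∃ p ∈ A, ∃ q ∈ A, p < q ∧ (∀ r ∈ A, ¬(p < r ∧ r < q)) ∧ m = GStr N p q) ∨
    m = ZProd fun i => if lbl i ∈ A then 1 else 0}

/-- The block of the partition `P` containing `x`. -/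
def blockOf (P : Finset (Finset ℕ)) (x : ℕ) : Finset ℕ :=
  P.sup fun A => if x ∈ A then A else ∅

/-- Partition update for the move “measure `Z i`”: `i` is split off into its own block. -/
def updZ (P : Finset (Finset ℕ)) (i : ℕ) : Finset (Finset ℕ) :=
  insert {i} ((P.image fun A => A.erase i).erase ∅)

/-- Partition update for the move “measure `g i`”: the blocks of `i−1` and `i+1` merge. -/
def updG (P : Finset (Finset ℕ)) (i : ℕ) : Finset (Finset ℕ) :=
  insert (blockOf P (i - 1) ∪ blockOf P (i + 1))
    ((P.erase (blockOf P (i - 1))).erase (blockOf P (i + 1)))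

/-- The partition of `{1, …, N}` into singletons. -/
def startPart (N : ℕ) : Finset (Finset ℕ) := (Finset.Icc 1 N).image fun i => {i}

/-- The matrix `M`, supported on `A`, viewed as an operator on the qubits in `A` only. -/
def restrictOp (A : Finset ι) (M : Op ι) : Matrix (↥A → Fin 2) (↥A → Fin 2) ℂ :=
  Matrix.of fun f g =>
    M (fun i => if hi : i ∈ A then f ⟨i, hi⟩ else 0)
      (fun i => if hi : i ∈ A then g ⟨i, hi⟩ else 0)

end QStab

namespace QStab

open Finset

section LinearAlgebra

open Module Submodule

lemma range_finAppend {α : Type*} {a b : ℕ} (f : Fin a → α) (g : Fin b → α) :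
    Set.range (Fin.append f g) = Set.range f ∪ Set.range g := by
  ext x
  constructor
  · rintro ⟨j, rfl⟩
    cases j using Fin.addCases <;> simp
  · rintro (⟨j, rfl⟩ | ⟨j, rfl⟩)
    exacts [⟨Fin.castAdd b j, by simp⟩, ⟨Fin.natAdd a j, by simp⟩]

lemma finrank_fun_prod_self {K κ : Type*} [Field K] (A : Finset κ) :
    finrank K (A → K × K) = 2 * #A := by
  simp [Module.finrank_pi_fintype, Module.finrank_prod, mul_comm]

variable {K E : Type*} [Field K] [AddCommGroup E] [Module K E] [FiniteDimensional K E]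

lemma exists_fin_span_eq (P : Submodule K E) :
    ∃ f : Fin (finrank K P) → E, (∀ j, f j ∈ P) ∧ span K (Set.range f) = P := by
  let b := Module.finBasis K P
  refine ⟨fun j => b j, fun j => (b j).2, ?_⟩
  rw [Set.range_comp' Subtype.val b, ← P.coe_subtype, span_image, b.span_eq, map_subtype_top]

lemma exists_sup_eq_finrank_add_eq_of_le {P Q : Submodule K E} (h : P ≤ Q) :
    ∃ C ≤ Q, P ⊔ C = Q ∧ finrank K P + finrank K C = finrank K Q := by
  obtain ⟨C, hC⟩ := exists_isCompl (⟨P, h⟩ : Set.Iic Q)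
  have hsup : P ⊔ C = Q := congrArg Subtype.val hC.sup_eq_top
  have hinf : P ⊓ C = ⊥ := congrArg Subtype.val hC.inf_eq_bot
  refine ⟨C, C.2, hsup, ?_⟩
  have := finrank_sup_add_finrank_inf_eq P (C : Submodule K E)
  rw [hsup, hinf, finrank_bot] at this
  omega

theorem exists_span_eq_top_card_filter_notMem_le (U W : Submodule K E) :
    ∃ v : Fin (finrank K E) → E, span K (Set.range v) = ⊤ ∧
      #{j | v j ∉ U} ≤ finrank K E - finrank K U ∧
      #{j | v j ∉ W} ≤ finrank K E - finrank K W := by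
  -- a variable length can be unified with the length of the concatenated family below
  suffices ∃ n, ∃ v : Fin n → E, n = finrank K E ∧ span K (Set.range v) = ⊤ ∧
      #{j | v j ∉ U} ≤ finrank K E - finrank K U ∧
      #{j | v j ∉ W} ≤ finrank K E - finrank K W by
    obtain ⟨_, v, rfl, hv⟩ := this
    exact ⟨v, hv⟩
  obtain ⟨C₁, hC₁U, hU, hrk₁⟩ := exists_sup_eq_finrank_add_eq_of_le (inf_le_left : U ⊓ W ≤ U)
  obtain ⟨C₂, hC₂W, hW, hrk₂⟩ := exists_sup_eq_finrank_add_eq_of_le (inf_le_right : U ⊓ W ≤ W)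
  obtain ⟨C₃, -, hE, hrk₃⟩ := exists_sup_eq_finrank_add_eq_of_le (le_top : U ⊔ W ≤ ⊤)
  obtain ⟨f₀, hf₀, hspan₀⟩ := exists_fin_span_eq (U ⊓ W)
  obtain ⟨f₁, hf₁, hspan₁⟩ := exists_fin_span_eq C₁
  obtain ⟨f₂, hf₂, hspan₂⟩ := exists_fin_span_eq C₂
  obtain ⟨f₃, -, hspan₃⟩ := exists_fin_span_eq C₃
  have hrk := finrank_sup_add_finrank_inf_eq U W
  rw [finrank_top] at hrk₃
  refine ⟨_, Fin.append f₀ (Fin.append f₁ (Fin.append f₂ f₃)), by omega, ?_, ?_, ?_⟩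
  · simp only [range_finAppend, span_union, hspan₀, hspan₁, hspan₂, hspan₃]
    rw [← sup_assoc C₁, ← sup_assoc (U ⊓ W), sup_sup_distrib_left, hU, hW, hE]
  · have h₀ : #{j | f₀ j ∉ U} = 0 := by simp [fun j => (mem_inf.mp (hf₀ j)).1]
    have h₁ : #{j | f₁ j ∉ U} = 0 := by simp [fun j => hC₁U (hf₁ j)]
    have h₂ : #{j | f₂ j ∉ U} ≤ finrank K C₂ := (card_le_univ _).trans_eq (Fintype.card_fin _)
    have h₃ : #{j | f₃ j ∉ U} ≤ finrank K C₃ := (card_le_univ _).trans_eq (Fintype.card_fin _)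
    simp only [card_filter, Fin.sum_univ_add, Fin.append_left, Fin.append_right] at h₀ h₁ h₂ h₃ ⊢
    omega
  · have h₀ : #{j | f₀ j ∉ W} = 0 := by simp [fun j => (mem_inf.mp (hf₀ j)).2]
    have h₂ : #{j | f₂ j ∉ W} = 0 := by simp [fun j => hC₂W (hf₂ j)]
    have h₁ : #{j | f₁ j ∉ W} ≤ finrank K C₁ := (card_le_univ _).trans_eq (Fintype.card_fin _)
    have h₃ : #{j | f₃ j ∉ W} ≤ finrank K C₃ := (card_le_univ _).trans_eq (Fintype.card_fin _)
    simp only [card_filter, Fin.sum_univ_add, Fin.append_left, Fin.append_right] at h₀ h₁ h₂ h₃ ⊢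
    omega

theorem exists_span_eq_top_card_filter_ne_zero_le {F G : Type*} [AddCommGroup F] [Module K F]
    [FiniteDimensional K F] [AddCommGroup G] [Module K G] [FiniteDimensional K G]
    (f : E →ₗ[K] F) (g : E →ₗ[K] G) :
    ∃ v : Fin (finrank K E) → E, span K (Set.range v) = ⊤ ∧
      #{j | f (v j) ≠ 0} ≤ finrank K F ∧ #{j | g (v j) ≠ 0} ≤ finrank K G := by
  obtain ⟨v, hspan, hf, hg⟩ := exists_span_eq_top_card_filter_notMem_le (LinearMap.ker f)
    (LinearMap.ker g)
  have hrkf := f.finrank_range_add_finrank_ker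
  have hrkg := g.finrank_range_add_finrank_ker
  have := f.range.finrank_le
  have := g.range.finrank_le
  simp only [LinearMap.mem_ker] at hf hg
  refine ⟨v, hspan, ?_, ?_⟩ <;> simp only [ne_eq] <;> omega

end LinearAlgebra

section Phase

lemma isPhase_one : IsPhase 1 := Or.inl rfl

lemma IsPhase.ne_zero {c : ℂ} (hc : IsPhase c) : c ≠ 0 := by
  rcases hc with rfl | rfl | rfl | rfl <;> simp

lemma IsPhase.mul {c c' : ℂ} (hc : IsPhase c) (hc' : IsPhase c') : IsPhase (c * c') := by
  rcases hc with rfl | rfl | rfl | rfl <;> rcases hc' with rfl | rfl | rfl | rfl <;>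
    simp [IsPhase]

end Phase

section Sign

def signChar (x : Fin 2) : ℂ := (-1) ^ (x : ℕ)

lemma signChar_add (x y : Fin 2) : signChar (x + y) = signChar x * signChar y := by
  fin_cases x <;> fin_cases y <;> simp [signChar]

lemma signChar_injective : Function.Injective signChar := by
  intro x y h
  fin_cases x <;> fin_cases y <;> first | rfl | norm_num [signChar] at h

lemma isPhase_signChar (x : Fin 2) : IsPhase (signChar x) := by
  fin_cases x <;> simp [signChar, IsPhase]

variable {ι : Type*} [Fintype ι]

def zSign (b g : ι → Fin 2) : ℂ := ∏ i, signChar (b i * g i)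

lemma zSign_add_left (b b' g : ι → Fin 2) : zSign (b + b') g = zSign b g * zSign b' g := by
  simp only [zSign, Pi.add_apply, add_mul, signChar_add, prod_mul_distrib]

lemma zSign_add_right (b g g' : ι → Fin 2) : zSign b (g + g') = zSign b g * zSign b g' := by
  simp only [zSign, Pi.add_apply, mul_add, signChar_add, prod_mul_distrib]

lemma zSign_zero_left (g : ι → Fin 2) : zSign 0 g = 1 := by simp [zSign, signChar]

lemma zSign_zero_right (b : ι → Fin 2) : zSign b 0 = 1 := by simp [zSign, signChar]

lemma zSign_single [DecidableEq ι] (b : ι → Fin 2) (i : ι) :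
    zSign b (Pi.single i 1) = signChar (b i) := by
  rw [zSign, prod_eq_single i (fun j _ hj => by simp [hj, signChar]) (by simp)]
  simp

lemma isPhase_zSign (b g : ι → Fin 2) : IsPhase (zSign b g) :=
  prod_induction _ IsPhase (fun _ _ => IsPhase.mul) isPhase_one fun _ _ => isPhase_signChar _

end Sign

lemma fin_two_fun_add_self {ι : Type*} (x : ι → Fin 2) : x + x = 0 := by
  funext i
  show x i + x i = 0
  generalize x i = y
  fin_cases y <;> rfl

lemma fin_two_fun_eq_add_iff {ι : Type*} (x y z : ι → Fin 2) : x = y + z ↔ x + z = y := by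
  constructor <;> rintro rfl <;> rw [add_assoc, fin_two_fun_add_self, add_zero]

variable {ι : Type*} [Fintype ι] [DecidableEq ι]

section PauliAlgebra

def shiftMatrix (a : ι → Fin 2) : Op ι := Matrix.of fun f g => if f = g + a then 1 else 0

lemma shiftMatrix_zero : shiftMatrix (0 : ι → Fin 2) = 1 := by
  ext f g
  simp [shiftMatrix, Matrix.one_apply]

lemma shiftMatrix_mul (a a' : ι → Fin 2) :
    shiftMatrix a * shiftMatrix a' = shiftMatrix (a + a') := by
  ext f g
  simp only [shiftMatrix, Matrix.mul_apply, Matrix.of_apply, fin_two_fun_eq_add_iff f, ite_mul,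
    one_mul, zero_mul, sum_ite_eq, mem_univ, if_true, fin_two_fun_eq_add_iff (f + a), add_assoc]

lemma PX_pow (i : ι) (c : Fin 2) : PX i ^ (c : ℕ) = shiftMatrix (Pi.single i c) := by
  fin_cases c
  · simp [shiftMatrix_zero]
  · ext f g
    have : Function.update g i (g i + 1) = g + Pi.single i 1 := by
      funext j
      by_cases hj : j = i <;> simp [hj]
    simp [PX, shiftMatrix, this]

lemma XProd_eq (a : ι → Fin 2) : XProd a = shiftMatrix a := by
  have key : ∀ l : List ι, (l.map fun i => PX i ^ (a i : ℕ)).prod =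
      shiftMatrix (l.map fun i => Pi.single i (a i)).sum := by
    intro l
    induction l with
    | nil => simp [shiftMatrix_zero]
    | cons i l ih =>
      rw [List.map_cons, List.prod_cons, ih, PX_pow, List.map_cons, List.sum_cons,
        shiftMatrix_mul]
  rw [XProd, key, sum_map_toList, univ_sum_single]

lemma PZ_pow (i : ι) (c : Fin 2) :
    PZ i ^ (c : ℕ) = Matrix.diagonal fun g => signChar (c * g i) := by
  fin_cases c
  · simp [signChar]
  · ext f g
    simp [PZ, signChar, Matrix.diagonal_apply]

lemma ZProd_eq (b : ι → Fin 2) : ZProd b = Matrix.diagonal (zSign b) := by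
  have key : ∀ l : List ι, (l.map fun i => PZ i ^ (b i : ℕ)).prod =
      Matrix.diagonal fun g => (l.map fun i => signChar (b i * g i)).prod := by
    intro l
    induction l with
    | nil => simp
    | cons i l ih =>
      rw [List.map_cons, List.prod_cons, ih, PZ_pow, Matrix.diagonal_mul_diagonal]
      simp
  rw [ZProd, key]
  exact congrArg Matrix.diagonal (funext fun g => prod_map_toList _ _)

lemma XProd_zero_mul_ZProd_zero : XProd (0 : ι → Fin 2) * ZProd 0 = 1 := by
  rw [XProd_eq, ZProd_eq, shiftMatrix_zero, one_mul]
  simp [funext zSign_zero_left]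

lemma XProd_mul_XProd (a a' : ι → Fin 2) : XProd a * XProd a' = XProd (a + a') := by
  simp only [XProd_eq, shiftMatrix_mul]

lemma ZProd_mul_ZProd (b b' : ι → Fin 2) : ZProd b * ZProd b' = ZProd (b + b') := by
  simp only [ZProd_eq, Matrix.diagonal_mul_diagonal, ← zSign_add_left]

lemma ZProd_mul_XProd (b a : ι → Fin 2) :
    ZProd b * XProd a = zSign b a • (XProd a * ZProd b) := by
  ext f g
  simp only [XProd_eq, ZProd_eq, shiftMatrix, Matrix.diagonal_mul, Matrix.mul_diagonal,
    Matrix.smul_apply, Matrix.of_apply, smul_eq_mul]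
  split_ifs with h
  · rw [h, zSign_add_right]
    ring
  · simp

lemma smul_XProd_mul_ZProd_apply (c : ℂ) (a b f g : ι → Fin 2) :
    (c • (XProd a * ZProd b)) f g = if f = g + a then c * zSign b g else 0 := by
  simp only [XProd_eq, ZProd_eq, shiftMatrix, Matrix.smul_apply, Matrix.mul_diagonal,
    Matrix.of_apply, smul_eq_mul]
  split_ifs <;> simp

lemma smul_XProd_mul_ZProd_mul (c c' : ℂ) (a b a' b' : ι → Fin 2) :
    (c • (XProd a * ZProd b)) * (c' • (XProd a' * ZProd b')) =
      (c * c' * zSign b a') • (XProd (a + a') * ZProd (b + b')) := by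
  rw [smul_mul_smul_comm, mul_assoc, ← mul_assoc (ZProd b), ZProd_mul_XProd, smul_mul_assoc,
    mul_smul_comm, smul_smul, ← mul_assoc (XProd a), ← mul_assoc (XProd a), XProd_mul_XProd,
    mul_assoc (XProd (a + a')), ZProd_mul_ZProd]

lemma eq_of_smul_XProd_mul_ZProd_eq {c c' : ℂ} {a b a' b' : ι → Fin 2} (hc : c ≠ 0)
    (h : c • (XProd a * ZProd b) = c' • (XProd a' * ZProd b')) : a = a' ∧ b = b' := by
  -- column `0` determines `a` and `c`, then column `Pi.single i 1` determines `b i`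
  have happ := fun f g => congrFun (congrFun h f) g
  simp only [smul_XProd_mul_ZProd_apply] at happ
  have ha : a = a' := by
    have := happ a 0
    simp only [zero_add, if_true, zSign_zero_right, mul_one] at this
    by_contra hne
    exact hc (this.trans (if_neg hne))
  subst ha
  have hc' : c = c' := by simpa [zSign_zero_right] using happ a 0
  subst hc'
  refine ⟨rfl, funext fun i => signChar_injective ?_⟩
  have := happ (Pi.single i 1 + a) (Pi.single i 1)
  simp only [if_true, zSign_single] at this
  exact mul_left_cancel₀ hc this

end PauliAlgebra

section PauliVector

lemma IsPauli.mul {M M' : Op ι} (hM : IsPauli M) (hM' : IsPauli M') : IsPauli (M * M') := by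
  obtain ⟨c, a, b, hc, rfl⟩ := hM
  obtain ⟨c', a', b', hc', rfl⟩ := hM'
  exact ⟨_, _, _, (hc.mul hc').mul (isPhase_zSign b a'), smul_XProd_mul_ZProd_mul ..⟩

/-- The binary vector of a Pauli string: site `i` of `c • X^a Z^b` carries `(a i, b i)`.
Junk value `0` on matrices that are not Pauli strings. -/
def pauliVec (M : Op ι) : ι → ZMod 2 × ZMod 2 :=
  if h : IsPauli M then
    fun i => (ZMod.finEquiv 2 (h.choose_spec.choose i),
      ZMod.finEquiv 2 (h.choose_spec.choose_spec.choose i))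
  else 0

lemma pauliVec_smul_XProd_mul_ZProd {c : ℂ} (hc : IsPhase c) (a b : ι → Fin 2) :
    pauliVec (c • (XProd a * ZProd b)) =
      fun i => (ZMod.finEquiv 2 (a i), ZMod.finEquiv 2 (b i)) := by
  have hM : IsPauli (c • (XProd a * ZProd b)) := ⟨c, a, b, hc, rfl⟩
  obtain ⟨ha, hb⟩ := eq_of_smul_XProd_mul_ZProd_eq hc.ne_zero
    hM.choose_spec.choose_spec.choose_spec.2
  rw [pauliVec, dif_pos hM, ← hb, ← ha]

lemma pauliVec_one : pauliVec (1 : Op ι) = 0 := by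
  rw [← XProd_zero_mul_ZProd_zero, ← one_smul ℂ (XProd _ * _),
    pauliVec_smul_XProd_mul_ZProd isPhase_one]
  ext <;> simp

lemma pauliVec_mul {M M' : Op ι} (hM : IsPauli M) (hM' : IsPauli M') :
    pauliVec (M * M') = pauliVec M + pauliVec M' := by
  obtain ⟨c, a, b, hc, rfl⟩ := hM
  obtain ⟨c', a', b', hc', rfl⟩ := hM'
  rw [smul_XProd_mul_ZProd_mul,
    pauliVec_smul_XProd_mul_ZProd ((hc.mul hc').mul (isPhase_zSign b a')),
    pauliVec_smul_XProd_mul_ZProd hc, pauliVec_smul_XProd_mul_ZProd hc']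
  ext <;> simp

lemma actsTriviallyAt_iff_pauliVec_eq_zero {M : Op ι} (hM : IsPauli M) (i : ι) :
    ActsTriviallyAt i M ↔ pauliVec M i = 0 := by
  constructor
  · rintro ⟨c, a, b, hc, ha, hb, rfl⟩
    simp [pauliVec_smul_XProd_mul_ZProd hc, ha, hb]
  · obtain ⟨c, a, b, hc, rfl⟩ := hM
    simp only [pauliVec_smul_XProd_mul_ZProd hc, Prod.mk_eq_zero,
      map_eq_zero_iff _ (ZMod.finEquiv 2).injective]
    exact fun ⟨ha, hb⟩ => ⟨c, a, b, hc, ha, hb, rfl⟩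

lemma exists_eq_smul_one_of_pauliVec_eq_zero {M : Op ι} (hM : IsPauli M)
    (h : pauliVec M = 0) : ∃ c, IsPhase c ∧ M = c • 1 := by
  obtain ⟨c, a, b, hc, rfl⟩ := hM
  rw [pauliVec_smul_XProd_mul_ZProd hc] at h
  simp only [funext_iff, Pi.zero_apply, Prod.mk_eq_zero,
    map_eq_zero_iff _ (ZMod.finEquiv 2).injective, forall_and] at h
  have ha : a = 0 := funext h.1
  have hb : b = 0 := funext h.2
  exact ⟨c, hc, by rw [ha, hb, XProd_zero_mul_ZProd_zero]⟩

end PauliVector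

section PauliGroup

variable {S : Submonoid (Op ι)}

/-- A phase `c ≠ 1` gives `c • 1 = -1` or `(c • 1)^2 = -1`. -/
lemma eq_one_of_pauliVec_eq_zero (hneg : (-1 : Op ι) ∉ S) {g : Op ι} (hg : g ∈ S)
    (hgP : IsPauli g) (h : pauliVec g = 0) : g = 1 := by
  obtain ⟨c, hc, rfl⟩ := exists_eq_smul_one_of_pauliVec_eq_zero hgP h
  have hsq := S.mul_mem hg hg
  rw [smul_mul_smul_comm, one_mul] at hsq
  rcases hc with rfl | rfl | rfl | rfl
  · exact one_smul ℂ 1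
  · exact absurd (by simpa using hg) hneg
  all_goals exact absurd (by simpa using hsq) hneg

lemma mul_self_eq_one_of_mem (hneg : (-1 : Op ι) ∉ S) {g : Op ι} (hg : g ∈ S) (hgP : IsPauli g) :
    g * g = 1 :=
  eq_one_of_pauliVec_eq_zero hneg (S.mul_mem hg hg) (hgP.mul hgP) <| by
    rw [pauliVec_mul hgP hgP, ZModModule.add_self]

lemma injOn_pauliVec (hpauli : ∀ g ∈ S, IsPauli g) (hneg : (-1 : Op ι) ∉ S) :
    Set.InjOn pauliVec (S : Set (Op ι)) := by
  intro g hg h hh hgh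
  have hprod : g * h = 1 := eq_one_of_pauliVec_eq_zero hneg (S.mul_mem hg hh)
    ((hpauli g hg).mul (hpauli h hh)) <| by
      rw [pauliVec_mul (hpauli g hg) (hpauli h hh), hgh, ZModModule.add_self]
  calc g = g * (h * h) := by rw [mul_self_eq_one_of_mem hneg hh (hpauli h hh), mul_one]
    _ = h := by rw [← mul_assoc, hprod, one_mul]

lemma coe_span_pauliVec_image (hpauli : ∀ g ∈ S, IsPauli g) :
    (↑(Submodule.span (ZMod 2) (pauliVec '' (S : Set (Op ι)))) : Set (ι → ZMod 2 × ZMod 2)) =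
      pauliVec '' S := by
  refine subset_antisymm (fun x hx => ?_) Submodule.subset_span
  induction hx using Submodule.span_induction with
  | mem x hx => exact hx
  | zero => exact ⟨1, S.one_mem, pauliVec_one⟩
  | add x y _ _ hx hy =>
    obtain ⟨g, hg, rfl⟩ := hx
    obtain ⟨h, hh, rfl⟩ := hy
    exact ⟨g * h, S.mul_mem hg hh, pauliVec_mul (hpauli g hg) (hpauli h hh)⟩
  | smul r x _ hx =>
    obtain rfl | rfl : r = 0 ∨ r = 1 := by revert r; decide
    · exact ⟨1, S.one_mem, by rw [pauliVec_one, zero_smul]⟩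
    · rwa [one_smul]

end PauliGroup

section Generators

open Submodule

variable {S : Submonoid (Op ι)}

lemma finrank_span_pauliVec_image (hpauli : ∀ g ∈ S, IsPauli g) (hneg : (-1 : Op ι) ∉ S)
    {m : ℕ} (hcard : Nat.card S = 2 ^ m) :
    Module.finrank (ZMod 2) (span (ZMod 2) (pauliVec '' (S : Set (Op ι)))) = m := by
  have hcardV : Nat.card (span (ZMod 2) (pauliVec '' (S : Set (Op ι)))) = 2 ^ m := by
    change Nat.card (↑(span (ZMod 2) (pauliVec '' (S : Set (Op ι)))) :
      Set (ι → ZMod 2 × ZMod 2)) = _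
    rw [coe_span_pauliVec_image hpauli, Nat.card_image_of_injOn (injOn_pauliVec hpauli hneg)]
    exact hcard
  rw [Module.natCard_eq_pow_finrank (K := ZMod 2), Nat.card_zmod] at hcardV
  exact Nat.pow_right_injective le_rfl hcardV

lemma closure_range_eq_of_span_pauliVec_eq (hpauli : ∀ g ∈ S, IsPauli g)
    (hneg : (-1 : Op ι) ∉ S) {κ : Type*} {s : κ → Op ι} (hs : ∀ j, s j ∈ S)
    (hspan : span (ZMod 2) (Set.range (pauliVec ∘ s)) =
      span (ZMod 2) (pauliVec '' (S : Set (Op ι)))) :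
    Submonoid.closure (Set.range s) = S := by
  have hle : Submonoid.closure (Set.range s) ≤ S :=
    Submonoid.closure_le.2 (Set.range_subset_iff.2 hs)
  refine le_antisymm hle fun h hh => ?_
  have hspan_le : span (ZMod 2) (Set.range (pauliVec ∘ s)) ≤
      span (ZMod 2) (pauliVec '' (Submonoid.closure (Set.range s) : Set (Op ι))) :=
    span_mono (Set.range_subset_iff.2 fun j => ⟨s j, Submonoid.subset_closure ⟨j, rfl⟩, rfl⟩)
  obtain ⟨g, hg, hgh⟩ : pauliVec h ∈ pauliVec '' (Submonoid.closure (Set.range s) : Set _) := by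
    rw [← coe_span_pauliVec_image fun g hg => hpauli g (hle hg)]
    exact hspan_le (hspan ▸ subset_span ⟨h, hh, rfl⟩)
  rwa [injOn_pauliVec hpauli hneg (hle hg) hh hgh] at hg

theorem exists_closure_eq_card_filter_nontrivial_le (S : Submonoid (Op ι))
    (hpauli : ∀ g ∈ S, IsPauli g) (hneg : (-1 : Op ι) ∉ S) {m : ℕ} (hcard : Nat.card S = 2 ^ m)
    (A B : Finset ι) :
    ∃ s : Fin m → Op ι, Submonoid.closure (Set.range s) = S ∧
      #{j | ∃ i ∈ A, ¬ActsTriviallyAt i (s j)} ≤ 2 * #A ∧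
      #{j | ∃ i ∈ B, ¬ActsTriviallyAt i (s j)} ≤ 2 * #B := by
  set V := span (ZMod 2) (pauliVec '' (S : Set (Op ι)))
  let restrict (A : Finset ι) : V →ₗ[ZMod 2] A → ZMod 2 × ZMod 2 :=
    LinearMap.funLeft _ _ Subtype.val ∘ₗ V.subtype
  have key := exists_span_eq_top_card_filter_ne_zero_le (restrict A) (restrict B)
  rw [finrank_span_pauliVec_image hpauli hneg hcard, finrank_fun_prod_self,
    finrank_fun_prod_self] at key
  obtain ⟨v, hspan, hA, hB⟩ := key
  have hv : ∀ j, ∃ g ∈ S, pauliVec g = v j := fun j => by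
    have := (v j).2
    rwa [← SetLike.mem_coe, coe_span_pauliVec_image hpauli] at this
  choose s hsS hsv using hv
  have hnontrivial : ∀ (A : Finset ι) j,
      (∃ i ∈ A, ¬ActsTriviallyAt i (s j)) ↔ restrict A (v j) ≠ 0 := by
    intro A j
    simp only [ne_eq, funext_iff, not_forall, restrict, LinearMap.comp_apply,
      LinearMap.funLeft_apply, Submodule.subtype_apply, ← hsv, Pi.zero_apply,
      actsTriviallyAt_iff_pauliVec_eq_zero (hpauli _ (hsS j)), Subtype.exists, exists_prop]
  have hspanV : span (ZMod 2) (Set.range (pauliVec ∘ s)) = V := by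
    rw [show pauliVec ∘ s = V.subtype ∘ v from funext hsv, Set.range_comp, span_image, hspan,
      map_subtype_top]
  refine ⟨s, closure_range_eq_of_span_pauliVec_eq hpauli hneg hsS hspanV, ?_, ?_⟩
  · convert hA using 4 with j
    exact hnontrivial A j
  · convert hB using 4 with j
    exact hnontrivial B j

end Generators

lemma card_filter_lbl_eq_le_one {N : ℕ} (q : ℕ) : #{i : Fin N | lbl i = q} ≤ 1 := by
  refine card_le_one.2 fun i hi j hj => Fin.ext ?_
  rw [mem_filter_univ, lbl] at hi hj
  omega

theorem clipped_gauge_generators_exist_general {N m : ℕ} (ql qr : ℕ)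
    (H : Finset (Op (Fin N))) (hone : (1 : Op (Fin N)) ∈ H)
    (hmul : ∀ g ∈ H, ∀ h ∈ H, g * h ∈ H)
    (hpauli : ∀ g ∈ H, IsPauli g)
    (hneg : (-1 : Op (Fin N)) ∉ H)
    (hcard : H.card = 2 ^ m) :
    ∃ s : Fin m → Op (Fin N),
      (∀ j, s j ∈ H) ∧
      (↑(Submonoid.closure (Set.range s)) : Set (Op (Fin N))) = ↑H ∧
      (Finset.univ.filter fun j : Fin m =>
        ∃ i : Fin N, lbl i = ql ∧ ¬ ActsTriviallyAt i (s j)).card ≤ 2 ∧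
      (Finset.univ.filter fun j : Fin m =>
        ∃ i : Fin N, lbl i = qr ∧ ¬ ActsTriviallyAt i (s j)).card ≤ 2 := by
  let S : Submonoid (Op (Fin N)) :=
    { carrier := H, mul_mem' := fun hg hh => hmul _ hg _ hh, one_mem' := hone }
  have hcardS : Nat.card S = 2 ^ m := by
    rw [← hcard, ← Nat.card_eq_finsetCard]
    rfl
  obtain ⟨s, hs, hql, hqr⟩ := exists_closure_eq_card_filter_nontrivial_le S hpauli hneg hcardS
    {i | lbl i = ql} {i | lbl i = qr}
  refine ⟨s, fun j => show s j ∈ S from hs ▸ Submonoid.subset_closure ⟨j, rfl⟩,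
    by rw [hs]; rfl, ?_, ?_⟩
  · simp only [mem_filter, mem_univ, true_and] at hql
    linarith [card_filter_lbl_eq_le_one (N := N) ql]
  · simp only [mem_filter, mem_univ, true_and] at hqr
    linarith [card_filter_lbl_eq_le_one (N := N) qr]

/-- Let `1 ≤ q_l ≤ q_r ≤ N` and let `H` be a finite group of Hermitian,
pairwise commuting Pauli strings with `−I ∉ H`, every element acting as the identity
outside the interval `[q_l, q_r]`, and `|H| = 2^m`.  Then `H` admits `m` generators
`s 0, …, s (m-1)` such that at most two of them act nontrivially on the site `q_l`, and
at most two act nontrivially on the site `q_r`. -/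
theorem clipped_gauge_generators_exist {N m : ℕ} (ql qr : ℕ)
    (hql : 1 ≤ ql) (hlr : ql ≤ qr) (hqr : qr ≤ N)
    (H : Finset (Op (Fin N))) (hone : (1 : Op (Fin N)) ∈ H)
    (hmul : ∀ g ∈ H, ∀ h ∈ H, g * h ∈ H)
    (hinv : ∀ g ∈ H, ∃ h ∈ H, g * h = 1)
    (hpauli : ∀ g ∈ H, IsPauli g)
    (hherm : ∀ g ∈ H, Matrix.IsHermitian g)
    (hcomm : ∀ g ∈ H, ∀ h ∈ H, Commute g h)
    (hneg : (-1 : Op (Fin N)) ∉ H)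
    (hsupp : ∀ g ∈ H,
      IsPauliSupportedOn (Finset.univ.filter fun i : Fin N => ql ≤ lbl i ∧ lbl i ≤ qr) g)
    (hcard : H.card = 2 ^ m) :
    ∃ s : Fin m → Op (Fin N),
      (∀ j, s j ∈ H) ∧
      (↑(Submonoid.closure (Set.range s)) : Set (Op (Fin N))) = ↑H ∧
      (Finset.univ.filter fun j : Fin m =>
        ∃ i : Fin N, lbl i = ql ∧ ¬ ActsTriviallyAt i (s j)).card ≤ 2 ∧
      (Finset.univ.filter fun j : Fin m =>
        ∃ i : Fin N, lbl i = qr ∧ ¬ ActsTriviallyAt i (s j)).card ≤ 2 :=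
  clipped_gauge_generators_exist_general ql qr H hone hmul hpauli hneg hcard

end QStab
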